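/- arXiv:2203.05888 — 2 statements merged into one kernel-verified Lean document; each statement's English description precedes it below -/
import Mathlib

section
/- Let (G,𝐑,π) be a Moser–Tardos tuple, fix an independence function on Rel(G) and rnd ∈ b^{π×ℕ}. Then for every i ∈ ℕ and every x ∈ IB(MT^{i+1}) there exists y ∈ IB(MT^i) with Var(x) ∩ Var(y) ≠ ∅ (y = x is allowed). -/
open MeasureTheory
open scoped Classical ENNReal

namespace MTLLL

variable {V : Type*} {ι : Type*}

/-- The out-neighbourhood `Var(x)` of a vertex `x` in the digraph with edge relation `E`. -/
def Var (E : V → V → Prop) (x : V) : Set V := {y | E x y}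

/-- The in-neighbourhood `Cl(x)`. -/
def Cl (E : V → V → Prop) (x : V) : Set V := {y | E y x}

/-- The neighbourhood `N(x) = Var(x) ∪ Cl(x)`. -/
def Nbr (E : V → V → Prop) (x : V) : Set V := Var E x ∪ Cl E x

/-- The maximal vertex degree of a digraph, as an extended natural number. -/
noncomputable def maxdeg (E : V → V → Prop) : ℕ∞ := ⨆ x : V, (Nbr E x).encard

/-- The digraph `Rel(G)`: edges join vertices whose out-neighbourhoods intersect. -/
def Rel (E : V → V → Prop) (x y : V) : Prop := (Var E x ∩ Var E y).Nonempty

/-- A set is independent in a digraph if no edge other than a self-loop joins two of its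
elements. -/
def Indep (E : V → V → Prop) (I : Set V) : Prop :=
  ∀ x ∈ I, ∀ y ∈ I, x ≠ y → ¬ E x y

/-- `I` is a maximal independent subset of `X`. -/
def MaxIndepIn (E : V → V → Prop) (X I : Set V) : Prop :=
  I ⊆ X ∧ Indep E I ∧ ∀ J : Set V, I ⊆ J → J ⊆ X → Indep E J → J = I

/-- A local rule: for each vertex `x` a set of colourings of `Var(x)` by `b` colours,
imposing no restriction when `Var(x)` is empty. -/
structure LocalRule (E : V → V → Prop) (b : ℕ) where
  R : ∀ x : V, Set (Var E x → Fin b)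
  isFull_of_empty : ∀ x : V, Var E x = ∅ → R x = Set.univ

/-- The complement rule `𝐑ᶜ(x)`. -/
def LocalRule.Rc {E : V → V → Prop} {b : ℕ} (R : LocalRule E b) (x : V) :
    Set (Var E x → Fin b) := (R.R x)ᶜ

/-- A colouring satisfies the rule if at every vertex its restriction to `Var(x)` obeys
`𝐑(x)`. -/
def Satisfies (E : V → V → Prop) {b : ℕ} (R : LocalRule E b) (f : V → Fin b) : Prop :=
  ∀ x : V, (fun y : Var E x => f y.1) ∈ R.R x

/-- The bad set `B(f)` of clauses violated by `f`. -/
def bad (E : V → V → Prop) {b : ℕ} (R : LocalRule E b) (f : V → Fin b) : Set V :=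
  {x : V | (fun y : Var E x => f y.1) ∈ R.Rc x}

/-- The symmetrisation of the digraph, with loops removed, as a simple graph;
it is used to measure graph distances. -/
def toSG (E : V → V → Prop) : SimpleGraph V where
  Adj x y := x ≠ y ∧ (E x y ∨ E y x)
  symm := ⟨fun x y h => ⟨Ne.symm h.1, h.2.symm⟩⟩
  loopless := ⟨fun x h => h.1 rfl⟩

/-- The ball of radius `r` around `x` in graph distance (ignoring orientations). -/
def ball (E : V → V → Prop) (x : V) (r : ℕ) : Set V :=
  {y | ∃ p : (toSG E).Walk x y, p.length ≤ r}

/-- The class `subexp(R,ε,d)`: max degree at most `d` and balls of radius `3R` of size at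
most `(1+ε)^R`. -/
def Subexp (E : V → V → Prop) (Rad d : ℕ) (ε : ℝ) : Prop :=
  maxdeg E ≤ (d : ℕ∞) ∧
  ∀ x : V, (ball E x (3 * Rad)).Finite ∧ ((ball E x (3 * Rad)).ncard : ℝ) ≤ (1 + ε) ^ Rad

/-- A partition (encoded by the map sending a vertex to its part) is `r`-sparse if distinct
vertices in the same part are at graph distance greater than `2r`. -/
def Sparse (E : V → V → Prop) (part : V → ι) (r : ℕ) : Prop :=
  ∀ x y : V, part x = part y → x ≠ y → y ∉ ball E x (2 * r)

/-- An independence function: `I X` is always a maximal independent subset of `X`. -/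
def IndepFun (E : V → V → Prop) (I : Set V → Set V) : Prop :=
  ∀ X : Set V, MaxIndepIn E X (I X)

/-- `Var` of a set of vertices. -/
def VarSet (E : V → V → Prop) (A : Set V) : Set V := ⋃ x ∈ A, Var E x

/-- One run of the Moser–Tardos algorithm: `(mtAux j).1 = MT^j` and `(mtAux j).2 = h^{j+1}`. -/
noncomputable def mtAux (E : V → V → Prop) {b : ℕ} (R : LocalRule E b)
    (part : V → ι) (I : Set V → Set V) (rnd : ι × ℕ → Fin b) :
    ℕ → (V → Fin b) × (V → ℕ)
  | 0 => (fun x => rnd (part x, 0), fun _ => 1)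
  | j + 1 =>
    let p := mtAux E R part I rnd j
    (fun x => if x ∈ VarSet E (I (bad E R p.1)) then rnd (part x, p.2 x) else p.1 x,
     fun x => if x ∈ VarSet E (I (bad E R p.1)) then p.2 x + 1 else p.2 x)

/-- The colouring `MT^j` produced by the Moser–Tardos algorithm. -/
noncomputable def MT (E : V → V → Prop) {b : ℕ} (R : LocalRule E b)
    (part : V → ι) (I : Set V → Set V) (rnd : ι × ℕ → Fin b) (j : ℕ) : V → Fin b :=
  (mtAux E R part I rnd j).1

/-- The resampling counters `h^k`. -/
noncomputable def hres (E : V → V → Prop) {b : ℕ} (R : LocalRule E b)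
    (part : V → ι) (I : Set V → Set V) (rnd : ι × ℕ → Fin b) : ℕ → V → ℕ
  | 0 => fun _ => 0
  | j + 1 => (mtAux E R part I rnd j).2

/-- The total number `h^∞(x)` of resamplings at `x`. -/
noncomputable def hinf (E : V → V → Prop) {b : ℕ} (R : LocalRule E b)
    (part : V → ι) (I : Set V → Set V) (rnd : ι × ℕ → Fin b) (x : V) : ℕ∞ :=
  ⨆ k : ℕ, (hres E R part I rnd k x : ℕ∞)

/-- `μ` is the product over `ι × ℕ` of uniform measures on `Fin b`: it is a probability
measure giving each cylinder set its natural measure. -/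
def IsUnifProduct {ι : Type*} (b : ℕ) (μ : Measure ((ι × ℕ) → Fin b)) : Prop :=
  IsProbabilityMeasure μ ∧
  ∀ (s : Finset (ι × ℕ)) (g : (ι × ℕ) → Fin b),
    μ {rnd | ∀ p ∈ s, rnd p = g p} = (1 / (b : ℝ≥0∞)) ^ s.card

end MTLLL

/-! If some variable of `x` was resampled at step `i`, the clause responsible for it is the
required `y`. Otherwise `MT^{i+1}` and `MT^i` agree on `Var(x)`, so `x` was already violated at
step `i`, and maximality of `IB(MT^i)` in `B(MT^i)` yields a clause sharing a variable with `x`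
(which is `x` itself if `x ∈ IB(MT^i)`). -/

namespace MTLLL

variable {V ι : Type*}

theorem Rel.symm {E : V → V → Prop} {x y : V} (h : Rel E x y) : Rel E y x := by
  unfold Rel at *
  rwa [Set.inter_comm]

theorem rel_self_iff {E : V → V → Prop} {x : V} : Rel E x x ↔ (Var E x).Nonempty := by
  simp only [Rel, Set.inter_self]

theorem MaxIndepIn.exists_adj_of_mem_of_notMem {E : V → V → Prop} {X S : Set V}
    (hS : MaxIndepIn E X S) {x : V} (hxX : x ∈ X) (hxS : x ∉ S) :
    ∃ y ∈ S, E x y ∨ E y x := by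
  obtain ⟨hSX, hSind, hSmax⟩ := hS
  have hnotind : ¬ Indep E (insert x S) := fun hind =>
    hxS (hSmax _ (Set.subset_insert x S) (Set.insert_subset hxX hSX) hind ▸ Set.mem_insert x S)
  simp only [Indep, not_forall, not_not] at hnotind
  obtain ⟨a, rfl | ha, c, rfl | hc, hne, hac⟩ := hnotind
  · exact absurd rfl hne
  · exact ⟨c, hc, Or.inl hac⟩
  · exact ⟨a, ha, Or.inr hac⟩
  · exact absurd hac (hSind a ha c hc hne)

theorem MaxIndepIn.exists_rel {E : V → V → Prop} {X S : Set V} (hS : MaxIndepIn (Rel E) X S)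
    {x : V} (hxX : x ∈ X) (hx : (Var E x).Nonempty) : ∃ y ∈ S, Rel E x y := by
  by_cases hxS : x ∈ S
  · exact ⟨x, hxS, rel_self_iff.2 hx⟩
  · obtain ⟨y, hyS, hxy | hyx⟩ := hS.exists_adj_of_mem_of_notMem hxX hxS
    exacts [⟨y, hyS, hxy⟩, ⟨y, hyS, hyx.symm⟩]

variable {E : V → V → Prop} {b : ℕ} {R : LocalRule E b}

theorem var_nonempty_of_mem_bad {f : V → Fin b} {x : V} (hx : x ∈ bad E R f) :
    (Var E x).Nonempty := by
  rw [Set.nonempty_iff_ne_empty]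
  intro hempty
  simp [bad, LocalRule.Rc, R.isFull_of_empty x hempty] at hx

theorem mem_bad_of_eqOn {f g : V → Fin b} {x : V} (hfg : Set.EqOn f g (Var E x))
    (hx : x ∈ bad E R f) : x ∈ bad E R g := by
  have hres : (fun y : Var E x => f y.1) = fun y => g y.1 := funext fun y => hfg y.2
  simpa only [bad, Set.mem_ofPred_eq, hres] using hx

theorem MT_succ_eqOn (part : V → ι) (I : Set V → Set V) (rnd : ι × ℕ → Fin b) (i : ℕ) :
    Set.EqOn (MT E R part I rnd (i + 1)) (MT E R part I rnd i)
      (VarSet E (I (bad E R (MT E R part I rnd i))))ᶜ := fun z hz => by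
  simp only [MT, mtAux]
  exact if_neg hz

end MTLLL

open MTLLL in
theorem exists_prev_resampled_clause_general
    {V : Type*} {ι : Type*}
    (E : V → V → Prop) (b : ℕ) (R : LocalRule E b) (part : V → ι)
    (I : Set V → Set V) (hI : IndepFun (Rel E) I) (rnd : ι × ℕ → Fin b)
    (i : ℕ) (x : V) (hx : x ∈ I (bad E R (MT E R part I rnd (i + 1)))) :
    ∃ y ∈ I (bad E R (MT E R part I rnd i)), (Var E x ∩ Var E y).Nonempty := by
  by_cases hresampled : (Var E x ∩ VarSet E (I (bad E R (MT E R part I rnd i)))).Nonempty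
  · obtain ⟨z, hzx, hz⟩ := hresampled
    simp only [VarSet, Set.mem_iUnion] at hz
    obtain ⟨y, hy, hzy⟩ := hz
    exact ⟨y, hy, z, hzx, hzy⟩
  · have hagree : Set.EqOn (MT E R part I rnd (i + 1)) (MT E R part I rnd i) (Var E x) :=
      fun z hzx => MT_succ_eqOn part I rnd i fun hz => hresampled ⟨z, hzx, hz⟩
    have hxbad : x ∈ bad E R (MT E R part I rnd i) :=
      mem_bad_of_eqOn hagree ((hI _).1 hx)
    exact (hI _).exists_rel hxbad (var_nonempty_of_mem_bad hxbad)

open MTLLL in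
/-- Lemma 3.4: every clause resampled at step `i+1` shares a variable with a clause
resampled at step `i` (possibly itself). -/
theorem exists_prev_resampled_clause
    {V : Type*} [Nonempty V] {ι : Type*} [Finite ι]
    (E : V → V → Prop) (b : ℕ) (hb : 1 < b) (R : LocalRule E b) (part : V → ι)
    (I : Set V → Set V) (hI : IndepFun (Rel E) I) (rnd : ι × ℕ → Fin b)
    (i : ℕ) (x : V) (hx : x ∈ I (bad E R (MT E R part I rnd (i + 1)))) :
    ∃ y ∈ I (bad E R (MT E R part I rnd i)), (Var E x ∩ Var E y).Nonempty :=
  exists_prev_resampled_clause_general E b R part I hI rnd i x hx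
end

section
/- For every Δ ∈ ℕ₊, every k ∈ ℕ₊ and every i ∈ ℕ, the number R_{k,i} of sequences (T_0,…,T_{k−1}) of isomorphism classes of Δ-labelled trees such that Σ_{j<k} |V(T_j)| = i satisfies R_{k,i} ≤ (i+1)^{k−1}·(eΔ)^i. -/
open MeasureTheory
open scoped Classical ENNReal

namespace MTLLL

/-- A set of label sequences is prefix-closed. A `Δ`-labelled tree (a finite directed tree
with in-degrees `0` or `1` and out-edges carrying distinct labels from `{0,…,Δ-1}`) is
determined up to isomorphism by the prefix-closed set of label sequences read along the
paths from the root; thus isomorphism classes of `Δ`-labelled trees with `i` vertices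
correspond exactly to finite prefix-closed sets `S ⊆ List (Fin Δ)` with `|S| = i`. -/
def PrefClosed {Δ : ℕ} (S : Set (List (Fin Δ))) : Prop :=
  ∀ l ∈ S, ∀ l' : List (Fin Δ), l' <+: l → l' ∈ S

/-- The type of isomorphism classes of `Δ`-labelled trees, encoded canonically as finite
prefix-closed sets of label sequences. -/
def LabTree (Δ : ℕ) : Type :=
  {S : Set (List (Fin Δ)) // S.Finite ∧ PrefClosed S}

/-- The number of vertices of (the isomorphism class of) a `Δ`-labelled tree. -/
noncomputable def LabTree.size {Δ : ℕ} (T : LabTree Δ) : ℕ := T.1.ncard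

end MTLLL

/-! List the `n` vertices of a tree in lexicographic order `v_0 = [] < v_1 < ⋯ < v_{n-1}`. The
tree is determined by the `(n-1)`-subset of `{0, …, n-1} × {0, …, Δ-1}` of pairs `(r, d)` such
that `v_r ++ [d]` is a vertex. Indeed, take another tree with the same pairs and the same first `j`
vertices; the parent of its `j`-th vertex `v'_j` precedes it, so it is some `v_r` with `r < j`, and
the pairs then make `v'_j` a vertex of the first tree beyond `v_0, …, v_{j-1}`. Hence
`v_j ≤ v'_j`, and by symmetry `v_j = v'_j`. So there are at most `C(nΔ, n-1) ≤ (eΔ)^n` trees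
with `n` vertices.

A `k`-tuple of trees with `i` vertices in total is its vector of sizes, one of at most
`C(i+k-1, k-1) ≤ (i+1)^(k-1)` compositions `(a_j)` of `i`, together with trees of sizes `a_j`,
of which there are at most `∏ (eΔ)^(a_j) = (eΔ)^i`. -/

namespace Finset

variable {β : Type*} [LinearOrder β]

noncomputable def rankIn (s : Finset β) (b : β) : ℕ := #{x ∈ s | x < b}

variable {s : Finset β}

theorem exists_orderEmbOfFin_eq {n : ℕ} (h : #s = n) {b : β} (hb : b ∈ s) :
    ∃ r, s.orderEmbOfFin h r = b := by
  rwa [← Set.mem_range, range_orderEmbOfFin]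

theorem rankIn_orderEmbOfFin {n : ℕ} (h : #s = n) (r : Fin n) :
    s.rankIn (s.orderEmbOfFin h r) = r := by
  set e := s.orderEmbOfFin h
  have hlt : {x ∈ s | x < e r} = (Iio r).map e.toEmbedding := by
    ext x
    simp only [mem_filter, mem_map, mem_Iio, RelEmbedding.coe_toEmbedding]
    constructor
    · rintro ⟨hx, hxr⟩
      obtain ⟨i, rfl⟩ := exists_orderEmbOfFin_eq h hx
      exact ⟨i, e.lt_iff_lt.mp hxr, rfl⟩
    · rintro ⟨i, hi, rfl⟩
      exact ⟨s.orderEmbOfFin_mem h i, e.lt_iff_lt.mpr hi⟩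
  rw [rankIn, hlt, card_map, Fin.card_Iio]

theorem rankIn_lt_card {b : β} (hb : b ∈ s) : s.rankIn b < #s := by
  obtain ⟨r, rfl⟩ := exists_orderEmbOfFin_eq rfl hb
  rw [rankIn_orderEmbOfFin]
  exact r.2

theorem rankIn_injOn : Set.InjOn s.rankIn s := by
  intro b hb c hc hbc
  obtain ⟨r, rfl⟩ := exists_orderEmbOfFin_eq rfl hb
  obtain ⟨t, rfl⟩ := exists_orderEmbOfFin_eq rfl hc
  rw [rankIn_orderEmbOfFin, rankIn_orderEmbOfFin] at hbc
  rw [Fin.ext hbc]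

end Finset

theorem List.lt_append_singleton {α : Type*} [LinearOrder α] (l : List α) (a : α) :
    l < l ++ [a] := by
  simpa using List.Lex.append_left (· < ·) (List.Lex.nil (a := a) (l := [])) l

theorem Nat.choose_mul_pred_le_exp_mul_pow {Δ : ℕ} (hΔ : 1 ≤ Δ) (n : ℕ) :
    ((n * Δ).choose (n - 1) : ℝ) ≤ (Real.exp 1 * Δ) ^ n := by
  obtain _ | m := n
  · simp
  have hΔ' : (1 : ℝ) ≤ Δ := by exact_mod_cast hΔ
  calc (((m + 1) * Δ).choose (m + 1 - 1) : ℝ)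
      ≤ (((m + 1) * Δ : ℕ) : ℝ) ^ m / m.factorial := Nat.choose_le_pow_div m _
    _ = (Δ : ℝ) ^ m * (((m + 1 : ℕ) : ℝ) ^ (m + 1) / (m + 1).factorial) := by
        rw [Nat.factorial_succ]
        push_cast
        field_simp
        rw [mul_pow]
        ring
    _ ≤ (Δ : ℝ) ^ (m + 1) * Real.exp (m + 1 : ℕ) := by
        exact mul_le_mul (pow_le_pow_right₀ hΔ' m.le_succ)
          (Real.pow_div_factorial_le_exp _ (by positivity) _) (by positivity) (by positivity)
    _ = (Real.exp 1 * Δ) ^ (m + 1) := by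
        rw [mul_pow, ← Real.exp_one_pow]
        ring

namespace Finset.Nat

theorem card_antidiagonalTuple_le (k i : ℕ) : #(antidiagonalTuple k i) ≤ (i + 1) ^ (k - 1) := by
  obtain _ | m := k
  · exact (card_le_one_of_subsingleton _).trans (by simp)
  calc #(antidiagonalTuple (m + 1) i)
      ≤ #(Fintype.piFinset fun _ : Fin m => range (i + 1)) := by
        refine card_le_card_of_injOn Fin.tail ?_ ?_
        · intro a ha
          simp only [mem_coe, mem_antidiagonalTuple] at ha
          simp only [mem_coe, Fintype.mem_piFinset, mem_range, Nat.lt_succ_iff]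
          intro j
          exact ha ▸ single_le_sum (fun j _ => Nat.zero_le (a j)) (mem_univ j.succ)
        · intro a ha b hb hab
          simp only [mem_coe, mem_antidiagonalTuple, Fin.sum_univ_succ] at ha hb
          have hhead : a 0 = b 0 := by
            have := congrArg (fun t : Fin m → ℕ => ∑ j, t j) hab
            simp only [Fin.tail] at this
            omega
          rw [← Fin.cons_self_tail a, ← Fin.cons_self_tail b, hhead, hab]
    _ = (i + 1) ^ (m + 1 - 1) := by simp

end Finset.Nat

section TupleCount

open Finset Finset.Nat

variable {α : Type*} (size : α → ℕ) [∀ n, Finite {x // size x = n}]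

theorem card_sum_size_eq_le_sum_prod (k i : ℕ) :
    Nat.card {T : Fin k → α // ∑ j, size (T j) = i} ≤
      ∑ a ∈ antidiagonalTuple k i, ∏ j, Nat.card {x // size x = a j} := by
  let ψ (T : {T : Fin k → α // ∑ j, size (T j) = i}) :
      Σ a : antidiagonalTuple k i, ∀ j, {x // size x = a.1 j} :=
    ⟨⟨fun j => size (T.1 j), mem_antidiagonalTuple.mpr T.2⟩, fun j => ⟨T.1 j, rfl⟩⟩
  have hψ : Function.Injective ψ := fun T T' h =>
    Subtype.ext (funext fun j => congrArg (fun p => (p.2 j).1) h)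
  calc _ ≤ Nat.card (Σ a : antidiagonalTuple k i, ∀ j, {x // size x = a.1 j}) :=
        Nat.card_le_card_of_injective ψ hψ
    _ = _ := by
        rw [Nat.card_sigma]
        simp only [Nat.card_pi]
        exact sum_coe_sort (antidiagonalTuple k i) fun a => ∏ j, Nat.card {x // size x = a j}

theorem card_sum_size_eq_le {c : ℝ} (hc : ∀ n, (Nat.card {x // size x = n} : ℝ) ≤ c ^ n)
    (k i : ℕ) :
    (Nat.card {T : Fin k → α // ∑ j, size (T j) = i} : ℝ) ≤ (i + 1) ^ (k - 1) * c ^ i := by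
  have hc0 : 0 ≤ c := by simpa using (Nat.cast_nonneg _).trans (hc 1)
  calc (Nat.card {T : Fin k → α // ∑ j, size (T j) = i} : ℝ)
      ≤ ∑ a ∈ antidiagonalTuple k i, ∏ j, (Nat.card {x // size x = a j} : ℝ) := by
        exact_mod_cast card_sum_size_eq_le_sum_prod size k i
    _ ≤ ∑ _a ∈ antidiagonalTuple k i, c ^ i := by
        refine sum_le_sum fun a ha => ?_
        calc ∏ j, (Nat.card {x // size x = a j} : ℝ) ≤ ∏ j, c ^ a j :=
              prod_le_prod (fun _ _ => Nat.cast_nonneg _) fun j _ => hc (a j)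
          _ = c ^ i := by rw [prod_pow_eq_pow_sum, mem_antidiagonalTuple.mp ha]
    _ = #(antidiagonalTuple k i) * c ^ i := by rw [sum_const, nsmul_eq_mul]
    _ ≤ (i + 1) ^ (k - 1) * c ^ i := by
        gcongr
        exact_mod_cast card_antidiagonalTuple_le k i

end TupleCount

namespace MTLLL

open Finset

variable {Δ : ℕ}

noncomputable def childCode (F : Finset (List (Fin Δ))) : Finset (ℕ × Fin Δ) :=
  {pd ∈ F ×ˢ (univ : Finset (Fin Δ)) | pd.1 ++ [pd.2] ∈ F}.image
    fun pd => (F.rankIn pd.1, pd.2)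

variable {F F' : Finset (List (Fin Δ))}

theorem mem_childCode {p : List (Fin Δ)} (hp : p ∈ F) (d : Fin Δ) :
    (F.rankIn p, d) ∈ childCode F ↔ p ++ [d] ∈ F := by
  simp only [childCode, mem_image, mem_filter, mem_product, mem_univ, and_true, Prod.mk.injEq,
    Prod.exists]
  constructor
  · rintro ⟨q, d', ⟨hq, hqd⟩, hrank, rfl⟩
    rwa [← rankIn_injOn hq hp hrank]
  · intro h
    exact ⟨p, d, ⟨hp, h⟩, rfl, rfl⟩

theorem childCode_subset : childCode F ⊆ range #F ×ˢ (univ : Finset (Fin Δ)) := by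
  intro x hx
  obtain ⟨pd, hpd, rfl⟩ := mem_image.mp hx
  simp only [mem_filter, mem_product] at hpd
  simp [rankIn_lt_card hpd.1.1]

theorem card_childCode (hF : PrefClosed (F : Set (List (Fin Δ)))) :
    #(childCode F) = #F - 1 := by
  rw [childCode, card_image_of_injOn]
  · rcases F.eq_empty_or_nonempty with rfl | ⟨w, hw⟩
    · simp
    rw [← card_erase_of_mem (hF w hw [] List.nil_prefix)]
    refine card_nbij (fun pd => pd.1 ++ [pd.2]) ?_ ?_ ?_
    · intro pd hpd
      simp only [coe_filter, Set.mem_ofPred_eq] at hpd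
      simp [hpd.2]
    · rintro ⟨p, d⟩ - ⟨q, e⟩ - h
      obtain ⟨rfl, h⟩ := List.append_inj h (by simpa using congrArg List.length h)
      simp_all
    · intro x hx
      simp only [coe_erase, Set.mem_sdiff, mem_coe, Set.mem_singleton_iff] at hx
      obtain hnil | ⟨p, d, rfl⟩ := x.eq_nil_or_concat
      · exact absurd hnil hx.2
      rw [List.concat_eq_append] at hx ⊢
      refine ⟨(p, d), ?_, rfl⟩
      simpa using ⟨hF _ hx.1 p (List.prefix_append p [d]), hx.1⟩
  · rintro ⟨p, d⟩ hp ⟨q, e⟩ hq h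
    simp only [coe_filter, mem_product, Set.mem_ofPred_eq, Prod.mk.injEq] at hp hq h
    rw [rankIn_injOn hp.1.1 hq.1.1 h.1, h.2]

theorem orderEmbOfFin_le_of_childCode_eq (hF : PrefClosed (F : Set (List (Fin Δ))))
    (hF' : PrefClosed (F' : Set (List (Fin Δ)))) {n : ℕ} (h : #F = n) (h' : #F' = n)
    (hcode : childCode F = childCode F') (j : Fin n)
    (hj : ∀ r < j, F.orderEmbOfFin h r = F'.orderEmbOfFin h' r) :
    F.orderEmbOfFin h j ≤ F'.orderEmbOfFin h' j := by
  set e := F.orderEmbOfFin h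
  set e' := F'.orderEmbOfFin h'
  have hmem : e' j ∈ F := by
    obtain hnil | ⟨p, d, hpd⟩ := (e' j).eq_nil_or_concat
    · exact hnil ▸ hF _ (F.orderEmbOfFin_mem h j) [] List.nil_prefix
    rw [List.concat_eq_append] at hpd
    obtain ⟨r, rfl⟩ := exists_orderEmbOfFin_eq h'
      (hF' _ (F'.orderEmbOfFin_mem h' j) p (hpd ▸ List.prefix_append p [d]))
    have hr : r < j := e'.lt_iff_lt.mp (hpd ▸ List.lt_append_singleton _ d)
    have hpF : e' r ∈ F := hj r hr ▸ F.orderEmbOfFin_mem h r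
    rw [hpd, ← mem_childCode hpF, ← hj r hr, rankIn_orderEmbOfFin, hcode,
      ← rankIn_orderEmbOfFin h' r, mem_childCode (F'.orderEmbOfFin_mem h' r), ← hpd]
    exact F'.orderEmbOfFin_mem h' j
  obtain ⟨m, hm⟩ := exists_orderEmbOfFin_eq h hmem
  have hjm : j ≤ m := by
    by_contra! hmj
    exact hmj.ne (e'.injective (hm ▸ (hj m hmj).symm))
  exact hm ▸ e.monotone hjm

theorem eq_of_childCode_eq (hF : PrefClosed (F : Set (List (Fin Δ))))
    (hF' : PrefClosed (F' : Set (List (Fin Δ)))) (hcard : #F = #F')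
    (hcode : childCode F = childCode F') : F = F' := by
  have heq : ∀ j, F.orderEmbOfFin rfl j = F'.orderEmbOfFin hcard.symm j := by
    intro j
    induction j using WellFoundedLT.induction with
    | _ j ih =>
      exact le_antisymm (orderEmbOfFin_le_of_childCode_eq hF hF' _ _ hcode j ih)
        (orderEmbOfFin_le_of_childCode_eq hF' hF _ _ hcode.symm j fun r hr => (ih r hr).symm)
  rw [← coe_inj, ← F.range_orderEmbOfFin rfl, ← F'.range_orderEmbOfFin hcard.symm]
  exact congrArg Set.range (funext heq)

namespace LabTree

noncomputable def toFinset (T : LabTree Δ) : Finset (List (Fin Δ)) := T.2.1.toFinset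

theorem coe_toFinset (T : LabTree Δ) : (T.toFinset : Set (List (Fin Δ))) = T.1 :=
  T.2.1.coe_toFinset

theorem card_toFinset (T : LabTree Δ) : #T.toFinset = T.size :=
  (Set.ncard_eq_toFinset_card T.1 T.2.1).symm

theorem prefClosed_toFinset (T : LabTree Δ) : PrefClosed (T.toFinset : Set (List (Fin Δ))) :=
  T.coe_toFinset ▸ T.2.2

theorem toFinset_injective : Function.Injective (toFinset (Δ := Δ)) := fun T T' h =>
  Subtype.ext (by rw [← coe_toFinset, h, coe_toFinset])

noncomputable def encode (n : ℕ) (T : {T : LabTree Δ // T.size = n}) :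
    powersetCard (n - 1) (range n ×ˢ (univ : Finset (Fin Δ))) :=
  ⟨childCode T.1.toFinset, by
    obtain ⟨T, rfl⟩ := T
    have hsub := childCode_subset (F := T.toFinset)
    rw [card_toFinset] at hsub
    exact mem_powersetCard.mpr
      ⟨hsub, by rw [card_childCode T.prefClosed_toFinset, card_toFinset]⟩⟩

theorem encode_injective (n : ℕ) : Function.Injective (encode (Δ := Δ) n) := fun T T' h =>
  Subtype.ext <| toFinset_injective <|
    eq_of_childCode_eq T.1.prefClosed_toFinset T'.1.prefClosed_toFinset
      (by rw [card_toFinset, card_toFinset, T.2, T'.2]) (congrArg Subtype.val h)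

instance (n : ℕ) : Finite {T : LabTree Δ // T.size = n} :=
  Finite.of_injective _ (encode_injective n)

theorem card_size_eq_le_choose (n : ℕ) :
    Nat.card {T : LabTree Δ // T.size = n} ≤ (n * Δ).choose (n - 1) := by
  calc _ ≤ Nat.card (powersetCard (n - 1) (range n ×ˢ (univ : Finset (Fin Δ)))) :=
        Nat.card_le_card_of_injective _ (encode_injective n)
    _ = (n * Δ).choose (n - 1) := by
        rw [Nat.card_eq_finsetCard, card_powersetCard, card_product, card_range, card_univ,
          Fintype.card_fin]

theorem card_size_eq_le (hΔ : 1 ≤ Δ) (n : ℕ) :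
    (Nat.card {T : LabTree Δ // T.size = n} : ℝ) ≤ (Real.exp 1 * Δ) ^ n :=
  (Nat.cast_le.mpr (card_size_eq_le_choose n)).trans (Nat.choose_mul_pred_le_exp_mul_pow hΔ n)

end LabTree

end MTLLL

open MTLLL in
theorem count_labelled_forest_sequences_general (Δ : ℕ) (hΔ : 1 ≤ Δ) (k : ℕ) (i : ℕ) :
    (Nat.card {T : Fin k → LabTree Δ // ∑ j : Fin k, (T j).size = i} : ℝ)
      ≤ (i + 1 : ℝ) ^ (k - 1) * (Real.exp 1 * Δ) ^ i :=
  card_sum_size_eq_le LabTree.size (LabTree.card_size_eq_le hΔ) k i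

open MTLLL in
/-- Lemma 3.6(b): the number `R_{k,i}` of `k`-tuples of isomorphism classes of `Δ`-labelled
trees with `i` vertices in total is at most `(i+1)^{k-1} (eΔ)^i`. -/
theorem count_labelled_forest_sequences (Δ : ℕ) (hΔ : 1 ≤ Δ) (k : ℕ) (hk : 1 ≤ k) (i : ℕ) :
    (Nat.card {T : Fin k → LabTree Δ // ∑ j : Fin k, (T j).size = i} : ℝ)
      ≤ (i + 1 : ℝ) ^ (k - 1) * (Real.exp 1 * Δ) ^ i :=
  count_labelled_forest_sequences_general Δ hΔ k i
end
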